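/- arXiv:math/0308053 — 8 statements merged into one kernel-verified Lean document; each statement's English description precedes it below -/
import Mathlib

section
/- Let Φ : M_n(ℂ) → M_n(ℂ) be given by Φ(a) = Σ_k x_k* a x_k with Σ_k x_k* x_k = 1 and Σ_k x_k x_k* ≤ 1. If a is positive semidefinite and Φ(a) ≥ a (in the Loewner order), then Φ(a) = a. -/
open Matrix ComplexOrder

open scoped MatrixOrder in
private lemma psd_eq_conjTranspose_mul_self {n : ℕ} {M : Matrix (Fin n) (Fin n) ℂ}
    (hM : M.PosSemidef) : ∃ B : Matrix (Fin n) (Fin n) ℂ, M = Bᴴ * B := by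
  obtain ⟨B, hB⟩ := CStarAlgebra.nonneg_iff_eq_star_mul_self.mp hM.nonneg
  exact ⟨B, hB⟩

private lemma trace_nonneg_of_psd {n : ℕ} {M : Matrix (Fin n) (Fin n) ℂ}
    (hM : M.PosSemidef) : 0 ≤ M.trace := by
  obtain ⟨B, rfl⟩ := psd_eq_conjTranspose_mul_self hM
  rw [Matrix.trace]
  refine Finset.sum_nonneg fun i _ => ?_
  simp only [Matrix.diag_apply, Matrix.mul_apply, Matrix.conjTranspose_apply]
  exact Finset.sum_nonneg fun j _ => star_mul_self_nonneg _

private lemma eq_zero_of_psd_trace_zero {n : ℕ} {M : Matrix (Fin n) (Fin n) ℂ}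
    (hM : M.PosSemidef) (h : M.trace = 0) : M = 0 := by
  obtain ⟨B, rfl⟩ := psd_eq_conjTranspose_mul_self hM
  suffices hB : B = 0 by simp [hB]
  have h' : ∑ i, ∑ j, star (B j i) * B j i = 0 := by
    rw [← h, Matrix.trace]
    simp only [Matrix.diag_apply, Matrix.mul_apply, Matrix.conjTranspose_apply]
  ext j i
  have := (Finset.sum_eq_zero_iff_of_nonneg (fun i _ =>
    Finset.sum_nonneg fun j _ => star_mul_self_nonneg (B j i))).mp h' i (Finset.mem_univ i)
  have := (Finset.sum_eq_zero_iff_of_nonneg (fun j _ =>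
    star_mul_self_nonneg (B j i))).mp this j (Finset.mem_univ j)
  simpa using (CStarRing.star_mul_self_eq_zero_iff _).mp this

/-- If Φ(a) = Σ_k x_kᴴ a x_k with Σ_k x_kᴴ x_k = 1 and Σ_k x_k x_kᴴ ≤ 1, and
a is positive semidefinite with Φ(a) ≥ a in the Loewner order, then Φ(a) = a. -/
theorem fixed_point_of_cp_map {n m : ℕ} (x : Fin m → Matrix (Fin n) (Fin n) ℂ)
    (hx1 : ∑ k, (x k)ᴴ * x k = 1)
    (hx2 : (1 - ∑ k, x k * (x k)ᴴ).PosSemidef)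
    (a : Matrix (Fin n) (Fin n) ℂ) (ha : a.PosSemidef)
    (hge : ((∑ k, (x k)ᴴ * a * x k) - a).PosSemidef) :
    ∑ k, (x k)ᴴ * a * x k = a := by
  have key : (∑ k, (x k)ᴴ * a * x k).trace = (a * ∑ k, x k * (x k)ᴴ).trace := by
    rw [Matrix.mul_sum, Matrix.trace_sum, Matrix.trace_sum]
    refine Finset.sum_congr rfl fun k _ => ?_
    rw [Matrix.trace_mul_cycle]; exact Matrix.trace_mul_comm _ _
  have htr2 : 0 ≤ (a * (1 - ∑ k, x k * (x k)ᴴ)).trace := by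
    obtain ⟨B, rfl⟩ := psd_eq_conjTranspose_mul_self ha
    rw [Matrix.mul_assoc, Matrix.trace_mul_comm]
    exact trace_nonneg_of_psd (by simpa [Matrix.mul_assoc] using hx2.mul_mul_conjTranspose_same B)
  have htr0 : ((∑ k, (x k)ᴴ * a * x k) - a).trace = 0 := by
    have hle : ((∑ k, (x k)ᴴ * a * x k) - a).trace ≤ 0 := by
      have : ((∑ k, (x k)ᴴ * a * x k) - a).trace = -(a * (1 - ∑ k, x k * (x k)ᴴ)).trace := by
        rw [Matrix.trace_sub, key, Matrix.mul_sub, Matrix.trace_sub, Matrix.mul_one]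
        ring
      rw [this]
      exact neg_nonpos.mpr htr2
    exact le_antisymm hle (trace_nonneg_of_psd hge)
  have := eq_zero_of_psd_trace_zero hge htr0
  rw [sub_eq_zero] at this
  exact this
end

section
/- Let Φ : M_n(ℂ) → M_n(ℂ) be given by Φ(a) = Σ_k x_k* a x_k with Σ_k x_k* x_k = 1 and Σ_k x_k x_k* ≤ 1. If a is positive semidefinite and Φ(a) = a, then Φ(a^m) = a^m for every natural number m. -/
open Matrix ComplexOrder

private lemma psd_trace_nonneg {n : ℕ} {A : Matrix (Fin n) (Fin n) ℂ}
    (hA : A.PosSemidef) : 0 ≤ A.trace := by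
  rw [Matrix.trace]
  refine Finset.sum_nonneg fun i _ => ?_
  have := hA.dotProduct_mulVec_nonneg (Pi.single i 1)
  simpa [dotProduct, Matrix.mulVec, Pi.single_apply, Finset.sum_ite_eq,
    Matrix.diag] using this

private lemma trace_conjTranspose_mul_self_eq_zero {n : ℕ}
    {A : Matrix (Fin n) (Fin n) ℂ} (h : (Aᴴ * A).trace = 0) : A = 0 := by
  have hterm : ∀ j i, (0:ℂ) ≤ star (A i j) * A i j := fun j i => star_mul_self_nonneg _
  have hsum : ∑ j, ∑ i, star (A i j) * A i j = 0 := by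
    simpa [Matrix.trace, Matrix.mul_apply, Matrix.conjTranspose_apply, Matrix.diag] using h
  have hz : ∀ j ∈ Finset.univ, ∑ i, star (A i j) * A i j = (0:ℂ) := by
    rw [← Finset.sum_eq_zero_iff_of_nonneg]
    · exact hsum
    · exact fun j _ => Finset.sum_nonneg fun i _ => hterm j i
  ext i j
  have h2 : star (A i j) * A i j = 0 :=
    (Finset.sum_eq_zero_iff_of_nonneg (fun i _ => hterm j i)).mp (hz j (Finset.mem_univ j)) i
      (Finset.mem_univ i)
  have h3 : (Complex.normSq (A i j) : ℂ) = 0 := by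
    rw [Complex.normSq_eq_conj_mul_self]; exact h2
  simpa using Complex.normSq_eq_zero.mp (Complex.ofReal_eq_zero.mp h3)

private lemma trace_mul_psd_nonneg {n : ℕ} {A B : Matrix (Fin n) (Fin n) ℂ}
    (hA : A.PosSemidef) (hB : B.PosSemidef) : 0 ≤ (A * B).trace := by
  obtain ⟨C, hC⟩ : ∃ C : Matrix (Fin n) (Fin n) ℂ, A = Cᴴ * C := by
    open scoped MatrixOrder in
    obtain ⟨B, hB⟩ := CStarAlgebra.nonneg_iff_eq_star_mul_self.mp hA.nonneg
    exact ⟨B, hB⟩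
  rw [hC, Matrix.mul_assoc, Matrix.trace_mul_comm]
  exact psd_trace_nonneg (hB.mul_mul_conjTranspose_same C)

/-- If Φ(a) = Σ_k x_kᴴ a x_k with Σ_k x_kᴴ x_k = 1 and Σ_k x_k x_kᴴ ≤ 1, and
a is positive semidefinite with Φ(a) = a, then Φ(aᵐ) = aᵐ for every m. -/
theorem fixed_point_powers {n m : ℕ} (x : Fin m → Matrix (Fin n) (Fin n) ℂ)
    (hx1 : ∑ k, (x k)ᴴ * x k = 1)
    (hx2 : (1 - ∑ k, x k * (x k)ᴴ).PosSemidef)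
    (a : Matrix (Fin n) (Fin n) ℂ) (ha : a.PosSemidef)
    (hfix : ∑ k, (x k)ᴴ * a * x k = a) :
    ∀ p : ℕ, ∑ k, (x k)ᴴ * a ^ p * x k = a ^ p := by
  -- Step 1: the function c k = a x k - x k a satisfies ∑ (c k)ᴴ (c k) = Φ(a²) - a²
  set c : Fin m → Matrix (Fin n) (Fin n) ℂ := fun k => a * x k - x k * a with hc
  have haH : aᴴ = a := ha.1
  have key : ∑ k, (c k)ᴴ * c k = (∑ k, (x k)ᴴ * (a * a) * x k) - a * a := by
    have expand : ∀ k, (c k)ᴴ * c k =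
        (x k)ᴴ * (a * a) * x k - ((x k)ᴴ * a * x k) * a
          - a * ((x k)ᴴ * a * x k) + a * ((x k)ᴴ * x k) * a := by
      intro k
      simp only [hc, Matrix.conjTranspose_sub, Matrix.conjTranspose_mul, haH]
      noncomm_ring
    calc ∑ k, (c k)ᴴ * c k
        = ∑ k, ((x k)ᴴ * (a * a) * x k - ((x k)ᴴ * a * x k) * a
          - a * ((x k)ᴴ * a * x k) + a * ((x k)ᴴ * x k) * a) :=
          Finset.sum_congr rfl fun k _ => expand k
      _ = (∑ k, (x k)ᴴ * (a * a) * x k) - (∑ k, (x k)ᴴ * a * x k) * a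
          - a * (∑ k, (x k)ᴴ * a * x k) + a * (∑ k, (x k)ᴴ * x k) * a := by
          simp [Finset.sum_sub_distrib, Finset.sum_add_distrib, Finset.sum_mul,
            Finset.mul_sum, Matrix.mul_assoc]
      _ = (∑ k, (x k)ᴴ * (a * a) * x k) - a * a := by
          rw [hfix, hx1]; noncomm_ring
  -- Step 2: trace of the LHS is ≤ 0
  have htrS : (∑ k, (c k)ᴴ * c k).trace = -(((a * a) * (1 - ∑ k, x k * (x k)ᴴ)).trace) := by
    rw [key, Matrix.trace_sub]
    have h1 : (∑ k, (x k)ᴴ * (a * a) * x k).trace = ((a * a) * ∑ k, x k * (x k)ᴴ).trace := by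
      rw [Matrix.trace_sum, Matrix.mul_sum, Matrix.trace_sum]
      refine Finset.sum_congr rfl fun k _ => ?_
      rw [Matrix.trace_mul_cycle, Matrix.trace_mul_comm]
    rw [h1, Matrix.mul_sub, Matrix.trace_sub, Matrix.mul_one]
    ring
  have haa : (a * a).PosSemidef := by
    have := ha.pow 2; rwa [pow_two] at this
  have hneg : (∑ k, (c k)ᴴ * c k).trace ≤ 0 := by
    rw [htrS]
    simpa using neg_nonpos_of_nonneg (trace_mul_psd_nonneg haa hx2)
  -- Step 3: each trace term is nonneg, so all are zero, so each c k = 0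
  have hpos : ∀ k ∈ Finset.univ, (0:ℂ) ≤ ((c k)ᴴ * c k).trace :=
    fun k _ => psd_trace_nonneg (Matrix.posSemidef_conjTranspose_mul_self (c k))
  have hsum0 : ∑ k, ((c k)ᴴ * c k).trace = 0 := by
    have h1 : 0 ≤ ∑ k, ((c k)ᴴ * c k).trace := Finset.sum_nonneg hpos
    have h2 : ∑ k, ((c k)ᴴ * c k).trace ≤ 0 := by
      rwa [← Matrix.trace_sum]
    exact le_antisymm h2 h1
  have hck : ∀ k, c k = 0 := by
    intro k
    have := (Finset.sum_eq_zero_iff_of_nonneg hpos).mp hsum0 k (Finset.mem_univ k)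
    exact trace_conjTranspose_mul_self_eq_zero this
  -- Step 4: a commutes with each x k, hence with every power
  have hcomm : ∀ k, a * x k = x k * a := by
    intro k
    have h := hck k; rw [hc] at h
    exact sub_eq_zero.mp h
  intro p
  have hcommp : ∀ k, a ^ p * x k = x k * a ^ p := by
    intro k
    have : Commute a (x k) := hcomm k
    exact (this.pow_left p)
  calc ∑ k, (x k)ᴴ * a ^ p * x k = ∑ k, (x k)ᴴ * x k * a ^ p := by
        refine Finset.sum_congr rfl fun k _ => ?_
        rw [Matrix.mul_assoc, hcommp k, ← Matrix.mul_assoc]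
    _ = a ^ p := by rw [← Finset.sum_mul, hx1, one_mul]
end

section
/- Let Φ : M_n(ℂ) → M_n(ℂ) be given by Φ(a) = Σ_k x_k* a x_k with Σ_k x_k* x_k = 1 and Σ_k x_k x_k* ≤ 1. If a is positive semidefinite and Φ(a) = a, then a commutes with every x_k. -/
open Matrix ComplexOrder

lemma trace_cms_eq {p q : ℕ} (A : Matrix (Fin p) (Fin q) ℂ) :
    (Aᴴ * A).trace = ((∑ i : Fin q, ∑ j : Fin p, Complex.normSq (A j i) : ℝ) : ℂ) := by
  simp only [Matrix.trace, Matrix.diag, Matrix.mul_apply, Matrix.conjTranspose_apply]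
  push_cast
  refine Finset.sum_congr rfl fun i _ => Finset.sum_congr rfl fun j _ => ?_
  rw [RCLike.star_def, mul_comm, Complex.mul_conj]

lemma trace_cms_nonneg {p q : ℕ} (A : Matrix (Fin p) (Fin q) ℂ) :
    0 ≤ (Aᴴ * A).trace := by
  rw [trace_cms_eq]
  exact_mod_cast Finset.sum_nonneg fun i _ => Finset.sum_nonneg fun j _ =>
    Complex.normSq_nonneg _

lemma eq_zero_of_trace_cms {p q : ℕ} (A : Matrix (Fin p) (Fin q) ℂ)
    (h : (Aᴴ * A).trace = 0) : A = 0 := by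
  rw [trace_cms_eq] at h
  have h' : (∑ i, ∑ j, Complex.normSq (A j i) : ℝ) = 0 := by exact_mod_cast h
  ext i j
  have h1 := (Finset.sum_eq_zero_iff_of_nonneg fun c _ =>
    Finset.sum_nonneg fun r _ => Complex.normSq_nonneg (A r c)).mp h' j (Finset.mem_univ _)
  have h2 := (Finset.sum_eq_zero_iff_of_nonneg fun r _ =>
    Complex.normSq_nonneg (A r j)).mp h1 i (Finset.mem_univ _)
  simpa using Complex.normSq_eq_zero.mp h2

lemma trace_mul_psd_nonneg_s3 {p : ℕ} {P Q : Matrix (Fin p) (Fin p) ℂ}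
    (hP : P.PosSemidef) (hQ : Q.PosSemidef) : 0 ≤ (P * Q).trace := by
  obtain ⟨B, rfl⟩ : ∃ B : Matrix (Fin p) (Fin p) ℂ, _ = Bᴴ * B := by
    open scoped MatrixOrder in exact CStarAlgebra.nonneg_iff_eq_star_mul_self.mp hP.nonneg
  obtain ⟨C, rfl⟩ : ∃ C : Matrix (Fin p) (Fin p) ℂ, _ = Cᴴ * C := by
    open scoped MatrixOrder in exact CStarAlgebra.nonneg_iff_eq_star_mul_self.mp hQ.nonneg
  have : (Bᴴ * B * (Cᴴ * C)).trace = ((B * Cᴴ)ᴴ * (B * Cᴴ)).trace := by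
    rw [show Bᴴ * B * (Cᴴ * C) = (Bᴴ * (B * Cᴴ)) * C by noncomm_ring,
      Matrix.trace_mul_comm,
      show (B * Cᴴ)ᴴ * (B * Cᴴ) = C * (Bᴴ * (B * Cᴴ)) by
        simp only [Matrix.conjTranspose_mul, Matrix.conjTranspose_conjTranspose]
        noncomm_ring]
  rw [this]
  exact trace_cms_nonneg _

/-- If Φ(a) = Σ_k x_kᴴ a x_k with Σ_k x_kᴴ x_k = 1 and Σ_k x_k x_kᴴ ≤ 1, and
a is positive semidefinite with Φ(a) = a, then a commutes with every x_k. -/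
theorem fixed_point_commutes {n m : ℕ} (x : Fin m → Matrix (Fin n) (Fin n) ℂ)
    (hx1 : ∑ k, (x k)ᴴ * x k = 1)
    (hx2 : (1 - ∑ k, x k * (x k)ᴴ).PosSemidef)
    (a : Matrix (Fin n) (Fin n) ℂ) (ha : a.PosSemidef)
    (hfix : ∑ k, (x k)ᴴ * a * x k = a) :
    ∀ k, a * x k = x k * a := by
  set c : Fin m → Matrix (Fin n) (Fin n) ℂ := fun k => x k * a - a * x k with hc
  have haH : aᴴ = a := ha.isHermitian
  -- Matrix identity: ∑ (c k)ᴴ * c k = (∑ xᴴ a a x) - a * a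
  have key : ∑ k, (c k)ᴴ * c k = (∑ k, (x k)ᴴ * (a * a) * x k) - a * a := by
    have expand : ∀ k, (c k)ᴴ * c k =
        a * ((x k)ᴴ * x k) * a - a * ((x k)ᴴ * a * x k)
          - ((x k)ᴴ * a * x k) * a + (x k)ᴴ * (a * a) * x k := by
      intro k
      simp only [hc, Matrix.conjTranspose_sub, Matrix.conjTranspose_mul, haH]
      noncomm_ring
    rw [Finset.sum_congr rfl fun k _ => expand k]
    simp only [Finset.sum_add_distrib, Finset.sum_sub_distrib,
      ← Matrix.mul_sum, ← Matrix.sum_mul]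
    rw [hx1, hfix]
    simp only [Matrix.mul_one, Matrix.one_mul]
    abel
  -- trace computation
  have haa : (a * a).PosSemidef := by
    nth_rewrite 1 [← haH]
    exact Matrix.posSemidef_conjTranspose_mul_self a
  have htr : ∑ k, ((c k)ᴴ * c k).trace = -((a * a) * (1 - ∑ k, x k * (x k)ᴴ)).trace := by
    rw [← Matrix.trace_sum, key, Matrix.trace_sub]
    have : (∑ k, (x k)ᴴ * (a * a) * x k).trace = ((a * a) * ∑ k, x k * (x k)ᴴ).trace := by
      rw [Matrix.trace_sum, Matrix.mul_sum, Matrix.trace_sum]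
      refine Finset.sum_congr rfl fun k _ => ?_
      rw [Matrix.mul_assoc, Matrix.trace_mul_comm, Matrix.mul_assoc]
    rw [this, Matrix.mul_sub, Matrix.trace_sub, Matrix.mul_one]
    ring
  have hle : ∑ k, ((c k)ᴴ * c k).trace ≤ 0 := by
    rw [htr, neg_nonpos]
    exact trace_mul_psd_nonneg_s3 haa hx2
  have hzero : ∀ k ∈ Finset.univ, ((c k)ᴴ * c k).trace = 0 := by
    have hnn : ∀ k ∈ (Finset.univ : Finset (Fin m)), 0 ≤ ((c k)ᴴ * c k).trace :=
      fun k _ => trace_cms_nonneg _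
    have hsum0 : ∑ k, ((c k)ᴴ * c k).trace = 0 :=
      le_antisymm hle (Finset.sum_nonneg hnn)
    exact (Finset.sum_eq_zero_iff_of_nonneg hnn).mp hsum0
  intro k
  have := eq_zero_of_trace_cms _ (hzero k (Finset.mem_univ k))
  rw [hc] at this
  have h0 : x k * a - a * x k = 0 := this
  exact (sub_eq_zero.mp h0).symm
end

section
/- Let Φ : M_n(ℂ) → M_n(ℂ) be given by Φ(a) = Σ_k x_k* a x_k with Σ_k x_k* x_k = 1 and Σ_k x_k x_k* ≤ 1. If a is Hermitian with Φ(a) = a, then a commutes with every x_k. -/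
open Matrix ComplexOrder

lemma trace_conjTranspose_mul_self_nonneg' {p q : ℕ} (B : Matrix (Fin p) (Fin q) ℂ) :
    0 ≤ (Bᴴ * B).trace := by
  rw [Matrix.trace]
  refine Finset.sum_nonneg fun j _ => ?_
  rw [Matrix.diag_apply, Matrix.mul_apply]
  exact Finset.sum_nonneg fun i _ => by
    simpa using star_mul_self_nonneg (B i j)

lemma eq_zero_of_trace_conjTranspose_mul_self {p q : ℕ} (B : Matrix (Fin p) (Fin q) ℂ)
    (h : (Bᴴ * B).trace = 0) : B = 0 := by
  rw [Matrix.trace] at h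
  have h1 : ∀ j ∈ Finset.univ, (0:ℂ) ≤ (Bᴴ * B).diag j := fun j _ => by
    rw [Matrix.diag_apply, Matrix.mul_apply]
    exact Finset.sum_nonneg fun i _ => by simpa using star_mul_self_nonneg (B i j)
  have h2 := (Finset.sum_eq_zero_iff_of_nonneg h1).mp h
  ext i j
  have h3 := h2 j (Finset.mem_univ j)
  rw [Matrix.diag_apply, Matrix.mul_apply] at h3
  have h4 : ∀ i ∈ Finset.univ, (0:ℂ) ≤ Bᴴ j i * B i j := fun i _ => by
    simpa using star_mul_self_nonneg (B i j)
  have h5 := (Finset.sum_eq_zero_iff_of_nonneg h4).mp h3 i (Finset.mem_univ i)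
  simp only [Matrix.conjTranspose_apply] at h5
  rw [Complex.star_def, mul_comm, Complex.mul_conj] at h5
  exact Complex.normSq_eq_zero.mp (by exact_mod_cast h5)

section sqrtPort

open scoped MatrixOrder

noncomputable def Matrix.PosSemidef.sqrt {n : ℕ} {A : Matrix (Fin n) (Fin n) ℂ}
    (_ : A.PosSemidef) : Matrix (Fin n) (Fin n) ℂ :=
  CFC.sqrt A

lemma Matrix.PosSemidef.sqrt_mul_self {n : ℕ} {A : Matrix (Fin n) (Fin n) ℂ}
    (hA : A.PosSemidef) : hA.sqrt * hA.sqrt = A :=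
  CFC.sqrt_mul_sqrt_self A hA.nonneg

lemma Matrix.PosSemidef.posSemidef_sqrt {n : ℕ} {A : Matrix (Fin n) (Fin n) ℂ}
    (hA : A.PosSemidef) : hA.sqrt.PosSemidef :=
  (CFC.sqrt_nonneg A).posSemidef

end sqrtPort

/-- If Φ(a) = Σ_k x_kᴴ a x_k with Σ_k x_kᴴ x_k = 1 and Σ_k x_k x_kᴴ ≤ 1, and
a is Hermitian with Φ(a) = a, then a commutes with every x_k. -/
theorem hermitian_fixed_point_commutes {n m : ℕ}
    (x : Fin m → Matrix (Fin n) (Fin n) ℂ)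
    (hx1 : ∑ k, (x k)ᴴ * x k = 1)
    (hx2 : (1 - ∑ k, x k * (x k)ᴴ).PosSemidef)
    (a : Matrix (Fin n) (Fin n) ℂ) (ha : a.IsHermitian)
    (hfix : ∑ k, (x k)ᴴ * a * x k = a) :
    ∀ k, a * x k = x k * a := by
  set c : Matrix (Fin n) (Fin n) ℂ := ∑ k, x k * (x k)ᴴ with hc
  set d : Fin m → Matrix (Fin n) (Fin n) ℂ := fun k => a * x k - x k * a with hd
  -- key algebraic identity
  have hdk : ∀ k, (d k)ᴴ * d k =
      (x k)ᴴ * (a * a) * x k - ((x k)ᴴ * a * x k) * a - a * ((x k)ᴴ * a * x k)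
        + a * ((x k)ᴴ * x k) * a := by
    intro k
    simp only [hd, conjTranspose_sub, conjTranspose_mul, ha.eq]
    noncomm_ring
  have key : ∑ k, (d k)ᴴ * d k = (∑ k, (x k)ᴴ * (a * a) * x k) - a * a := by
    rw [Finset.sum_congr rfl fun k _ => hdk k]
    simp only [Finset.sum_add_distrib, Finset.sum_sub_distrib, ← Finset.sum_mul,
      ← Finset.mul_sum, hfix]
    rw [hx1]
    noncomm_ring
  -- trace computation
  have tr1 : (∑ k, (x k)ᴴ * (a * a) * x k).trace = (c * (a * a)).trace := by
    rw [trace_sum, hc, Finset.sum_mul, trace_sum]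
    exact Finset.sum_congr rfl fun k _ => by
      rw [trace_mul_cycle]
  have s := hx2.sqrt
  have hs : hx2.sqrt * hx2.sqrt = 1 - c := hx2.sqrt_mul_self
  have hsH : hx2.sqrtᴴ = hx2.sqrt := hx2.posSemidef_sqrt.1
  have tr2 : (∑ k, (d k)ᴴ * d k).trace = -((hx2.sqrt * a)ᴴ * (hx2.sqrt * a)).trace := by
    rw [key, trace_sub, tr1]
    have : (hx2.sqrt * a)ᴴ * (hx2.sqrt * a) = a * (1 - c) * a := by
      rw [conjTranspose_mul, hsH, ha.eq,
        show a * hx2.sqrt * (hx2.sqrt * a) = a * (hx2.sqrt * hx2.sqrt) * a from by noncomm_ring,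
        hs]
    rw [this, show a * (1 - c) * a = a * a - a * c * a by noncomm_ring, trace_sub,
      show a * c * a = a * (c * a) by noncomm_ring, trace_mul_cycle']
    ring
  have hnn : ∀ k ∈ Finset.univ, (0:ℂ) ≤ ((d k)ᴴ * d k).trace :=
    fun k _ => trace_conjTranspose_mul_self_nonneg' _
  have hT : ∑ k, ((d k)ᴴ * d k).trace = 0 := by
    have hle : ∑ k, ((d k)ᴴ * d k).trace ≤ 0 := by
      rw [← trace_sum, tr2]
      simpa using trace_conjTranspose_mul_self_nonneg' (hx2.sqrt * a)
    exact le_antisymm hle (Finset.sum_nonneg hnn)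
  intro k
  have hk := (Finset.sum_eq_zero_iff_of_nonneg hnn).mp hT k (Finset.mem_univ k)
  have := eq_zero_of_trace_conjTranspose_mul_self (d k) hk
  have : a * x k - x k * a = 0 := this
  linear_combination (norm := noncomm_ring) this
end

section
/- Let x_1, …, x_m be Hermitian matrices in M_n(ℂ) with Σ_k x_k² = 1, and let Φ(a) = Σ_k x_k a x_k. Let a be a positive semidefinite matrix whose largest eigenvalue is λ₁ with eigenprojection p₁. If Φ(a) ≥ a, then every eigenvector ξ of a with eigenvalue λ₁ satisfies a x_k ξ = λ₁ x_k ξ for all k, and consequently p₁ commutes with every x_k. -/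
open Matrix ComplexOrder

private lemma my_sum_mulVec {n m : ℕ} (M : Fin m → Matrix (Fin n) (Fin n) ℂ)
    (v : Fin n → ℂ) : (∑ j, M j) *ᵥ v = ∑ j, M j *ᵥ v :=
  map_sum (Matrix.mulVec.addMonoidHomLeft v) M Finset.univ

private lemma my_dp_sum {n m : ℕ} (v : Fin n → ℂ) (w : Fin m → Fin n → ℂ) :
    v ⬝ᵥ (∑ j, w j) = ∑ j, v ⬝ᵥ w j := by
  simp [dotProduct, Finset.mul_sum, Finset.sum_apply]
  exact Finset.sum_comm

/-- Let x_k be Hermitian matrices with Σ_k x_k² = 1 and Φ(a) = Σ_k x_k a x_k. Let a be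
positive semidefinite with largest eigenvalue λ₁ (so λ₁•1 − a ≥ 0) and eigenprojection
p₁ onto the λ₁-eigenspace. If Φ(a) ≥ a, then every eigenvector ξ of a with eigenvalue λ₁
satisfies a (x_k ξ) = λ₁ (x_k ξ) for all k, and p₁ commutes with every x_k. -/
theorem top_eigenspace_invariant {n m : ℕ} (x : Fin m → Matrix (Fin n) (Fin n) ℂ)
    (hxsa : ∀ k, (x k).IsHermitian) (hx1 : ∑ k, x k * x k = 1)
    (a : Matrix (Fin n) (Fin n) ℂ) (ha : a.PosSemidef)
    (lam : ℝ) (hlam : ((lam : ℂ) • 1 - a).PosSemidef)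
    (hlam_eig : ∃ ξ : Fin n → ℂ, ξ ≠ 0 ∧ a.mulVec ξ = (lam : ℂ) • ξ)
    (p : Matrix (Fin n) (Fin n) ℂ) (hp1 : p = pᴴ) (hp2 : p * p = p)
    (hprange : ∀ ξ : Fin n → ℂ, a.mulVec ξ = (lam : ℂ) • ξ ↔ p.mulVec ξ = ξ)
    (hge : ((∑ k, x k * a * x k) - a).PosSemidef) :
    (∀ ξ : Fin n → ℂ, a.mulVec ξ = (lam : ℂ) • ξ →
      ∀ k, a.mulVec ((x k).mulVec ξ) = (lam : ℂ) • (x k).mulVec ξ) ∧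
    (∀ k, p * x k = x k * p) := by
  set b : Matrix (Fin n) (Fin n) ℂ := (lam : ℂ) • 1 - a with hb
  have key : ∀ ξ : Fin n → ℂ, a.mulVec ξ = (lam : ℂ) • ξ →
      ∀ k, a.mulVec ((x k).mulVec ξ) = (lam : ℂ) • (x k).mulVec ξ := by
    intro ξ hξ k
    have hbξ : b.mulVec ξ = 0 := by
      simp [hb, Matrix.sub_mulVec, Matrix.smul_mulVec, hξ]
    have hterm_eq : ∀ j, star ((x j).mulVec ξ) ⬝ᵥ b.mulVec ((x j).mulVec ξ)
        = star ξ ⬝ᵥ (x j * b * x j).mulVec ξ := by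
      intro j
      rw [star_mulVec, Matrix.mulVec_mulVec, Matrix.dotProduct_mulVec,
        Matrix.vecMul_vecMul, (hxsa j).eq, Matrix.dotProduct_mulVec, ← mul_assoc]
    have hsum_mat : ∑ j, x j * b * x j = b - ((∑ k, x k * a * x k) - a) := by
      have h1 : ∀ j, x j * b * x j = (lam : ℂ) • (x j * x j) - x j * a * x j := by
        intro j
        simp [hb, mul_sub, sub_mul, Matrix.mul_smul, Matrix.smul_mul, mul_assoc]
      simp only [h1]
      simp only [Finset.sum_sub_distrib, ← Finset.smul_sum, hx1, hb]
      abel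
    have hsum : ∑ j, star ((x j).mulVec ξ) ⬝ᵥ b.mulVec ((x j).mulVec ξ)
        = - (star ξ ⬝ᵥ ((∑ k, x k * a * x k) - a).mulVec ξ) := by
      simp_rw [hterm_eq]
      rw [← my_dp_sum, ← my_sum_mulVec, hsum_mat, Matrix.sub_mulVec, hbξ, zero_sub,
        dotProduct_neg]
    have hD : 0 ≤ star ξ ⬝ᵥ ((∑ k, x k * a * x k) - a).mulVec ξ := hge.dotProduct_mulVec_nonneg ξ
    have hterm_nonneg : ∀ j ∈ Finset.univ,
        0 ≤ star ((x j).mulVec ξ) ⬝ᵥ b.mulVec ((x j).mulVec ξ) := fun j _ => hlam.dotProduct_mulVec_nonneg _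
    have hsum_zero : ∑ j, star ((x j).mulVec ξ) ⬝ᵥ b.mulVec ((x j).mulVec ξ) = 0 := by
      refine le_antisymm ?_ (Finset.sum_nonneg hterm_nonneg)
      rw [hsum]
      simpa using hD
    have hterm_zero : star ((x k).mulVec ξ) ⬝ᵥ b.mulVec ((x k).mulVec ξ) = 0 :=
      (Finset.sum_eq_zero_iff_of_nonneg hterm_nonneg).mp hsum_zero k (Finset.mem_univ k)
    have hbxξ : b.mulVec ((x k).mulVec ξ) = 0 :=
      (hlam.dotProduct_mulVec_zero_iff _).mp hterm_zero
    have heq : b.mulVec ((x k).mulVec ξ)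
        = (lam : ℂ) • (x k).mulVec ξ - a.mulVec ((x k).mulVec ξ) := by
      rw [hb, Matrix.sub_mulVec, Matrix.smul_mulVec, Matrix.one_mulVec]
    rw [hbxξ] at heq
    exact (sub_eq_zero.mp heq.symm).symm
  refine ⟨key, fun k => ?_⟩
  have hcomm' : p * x k * p = x k * p := by
    have hv : ∀ v, (p * x k * p) *ᵥ v = (x k * p) *ᵥ v := by
      intro v
      have h1 : a.mulVec (p.mulVec v) = (lam : ℂ) • (p.mulVec v) :=
        (hprange _).mpr (by rw [Matrix.mulVec_mulVec, hp2])
      have h3 : p.mulVec ((x k).mulVec (p.mulVec v)) = (x k).mulVec (p.mulVec v) :=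
        (hprange _).mp (key _ h1 k)
      simpa [Matrix.mulVec_mulVec, mul_assoc] using h3
    ext i j
    have := congrFun (hv (Pi.single j 1)) i
    simpa [Matrix.mulVec_single] using this
  have hherm : (p * x k * p)ᴴ = p * x k * p := by
    rw [Matrix.conjTranspose_mul, Matrix.conjTranspose_mul, ← hp1, (hxsa k).eq, mul_assoc]
  calc p * x k = (x k * p)ᴴ := by rw [Matrix.conjTranspose_mul, ← hp1, (hxsa k).eq]
    _ = (p * x k * p)ᴴ := by rw [hcomm']
    _ = p * x k * p := hherm
    _ = x k * p := hcomm'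
end

section
/- Let x_1, …, x_m be Hermitian matrices in M_n(ℂ) with Σ_k x_k² = 1, and Φ(a) = Σ_k x_k a x_k. If a is positive semidefinite and Φ(a) ≥ a in the Loewner order, then a x_k = x_k a for every k (Lüders theorem). -/
open Matrix ComplexOrder

private lemma trace_psd_nonneg {n : ℕ} {p : Matrix (Fin n) (Fin n) ℂ}
    (hp : p.PosSemidef) : 0 ≤ p.trace := by
  have h : ∀ i, 0 ≤ p i i := fun i => by
    have := hp.dotProduct_mulVec_nonneg (Pi.single i 1)
    simpa [Matrix.mulVec, dotProduct, Pi.single_apply] using this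
  exact Finset.sum_nonneg fun i _ => h i

private lemma eq_zero_of_trace_mul_conjTranspose {n : ℕ}
    {c : Matrix (Fin n) (Fin n) ℂ} (h : (c * cᴴ).trace = 0) : c = 0 := by
  have hterm : ∀ i j : Fin n, 0 ≤ c i j * star (c i j) := fun i j =>
    mul_star_self_nonneg _
  have hexp : (c * cᴴ).trace = ∑ i, ∑ j, c i j * star (c i j) := by
    simp [Matrix.trace, Matrix.mul_apply, Matrix.diag, Matrix.conjTranspose_apply]
  rw [hexp] at h
  have h0 : ∀ i ∈ Finset.univ, (0:ℂ) ≤ ∑ j, c i j * star (c i j) := fun i _ =>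
    Finset.sum_nonneg fun j _ => hterm i j
  ext i j
  have hi := (Finset.sum_eq_zero_iff_of_nonneg h0).mp h i (Finset.mem_univ i)
  have hj := (Finset.sum_eq_zero_iff_of_nonneg
    (fun j _ => hterm i j)).mp hi j (Finset.mem_univ j)
  rcases mul_eq_zero.mp hj with h' | h'
  · simpa using h'
  · simpa using congrArg star h'

/-- Lüders theorem: if x_k are Hermitian matrices with Σ_k x_k² = 1,
Φ(a) = Σ_k x_k a x_k, and a is positive semidefinite with Φ(a) ≥ a in the Loewner
order, then a commutes with every x_k. -/
theorem lueders_theorem {n m : ℕ} (x : Fin m → Matrix (Fin n) (Fin n) ℂ)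
    (hxsa : ∀ k, (x k).IsHermitian) (hx1 : ∑ k, x k * x k = 1)
    (a : Matrix (Fin n) (Fin n) ℂ) (ha : a.PosSemidef)
    (hge : ((∑ k, x k * a * x k) - a).PosSemidef) :
    ∀ k, a * x k = x k * a := by
  set c : Fin m → Matrix (Fin n) (Fin n) ℂ := fun k => x k * a - a * x k with hc
  have hcT : ∀ k, (c k)ᴴ = a * x k - x k * a := fun k => by
    simp only [hc, Matrix.conjTranspose_sub, Matrix.conjTranspose_mul,
      (hxsa k).eq, ha.1.eq]
  set Φ : Matrix (Fin n) (Fin n) ℂ := ∑ k, x k * a * x k with hΦ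
  set d : Matrix (Fin n) (Fin n) ℂ := Φ - a with hd
  -- termwise expansion
  have hterm : ∀ k, c k * (c k)ᴴ
      = x k * (a * a) * x k - (x k * a * x k) * a
        - a * (x k * a * x k) + a * (x k * x k) * a := by
    intro k
    rw [hcT k]
    simp only [hc]
    noncomm_ring
  -- key identity for the sum
  have hkey : ∑ k, c k * (c k)ᴴ
      = (∑ k, x k * (a * a) * x k) - Φ * a - a * Φ + a * a := by
    calc ∑ k, c k * (c k)ᴴ
        = ∑ k, (x k * (a * a) * x k - (x k * a * x k) * a
            - a * (x k * a * x k) + a * (x k * x k) * a) := by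
          exact Finset.sum_congr rfl fun k _ => hterm k
      _ = (∑ k, x k * (a * a) * x k) - (∑ k, (x k * a * x k) * a)
            - (∑ k, a * (x k * a * x k)) + ∑ k, a * (x k * x k) * a := by
          simp [Finset.sum_add_distrib, Finset.sum_sub_distrib]
      _ = (∑ k, x k * (a * a) * x k) - Φ * a - a * Φ + a * a := by
          have e1 : ∑ k, (x k * a * x k) * a = Φ * a := by rw [hΦ, Finset.sum_mul]
          have e2 : ∑ k, a * (x k * a * x k) = a * Φ := by rw [hΦ, Finset.mul_sum]
          have e3 : ∑ k, a * (x k * x k) * a = a * a := by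
            calc ∑ k, a * (x k * x k) * a = a * (∑ k, x k * x k) * a := by
                  rw [Finset.mul_sum, Finset.sum_mul]
              _ = a * a := by rw [hx1, mul_one]
          rw [e1, e2, e3]
  -- Φ is trace preserving: trace of ∑ x b x = trace b
  have htp : ∀ b : Matrix (Fin n) (Fin n) ℂ,
      (∑ k, x k * b * x k).trace = b.trace := by
    intro b
    rw [Matrix.trace_sum]
    have : ∀ k, (x k * b * x k).trace = (b * (x k * x k)).trace := fun k => by
      rw [Matrix.trace_mul_comm, ← Matrix.mul_assoc, Matrix.trace_mul_comm]
    rw [Finset.sum_congr rfl fun k _ => this k, ← Matrix.trace_sum,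
      ← Finset.mul_sum, hx1, mul_one]
  -- trace of a * d is nonneg
  have had : 0 ≤ (a * d).trace := by
    obtain ⟨B, hB⟩ : ∃ B : Matrix (Fin n) (Fin n) ℂ, a = Bᴴ * B := by
      open scoped MatrixOrder in
      have h0 : (0 : Matrix (Fin n) (Fin n) ℂ) ≤ a := Matrix.nonneg_iff_posSemidef.mpr ha
      open scoped MatrixOrder in
      exact ⟨CFC.sqrt a, by rw [← Matrix.star_eq_conjTranspose,
        (IsSelfAdjoint.of_nonneg (CFC.sqrt_nonneg a)).star_eq, CFC.sqrt_mul_sqrt_self a h0]⟩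
    have : (a * d).trace = (B * d * Bᴴ).trace := by
      rw [hB, Matrix.mul_assoc, Matrix.trace_mul_comm]
    rw [this]
    exact trace_psd_nonneg (hge.mul_mul_conjTranspose_same B)
  -- total trace is nonpositive
  have htr : (∑ k, c k * (c k)ᴴ).trace = -((a * d).trace + (a * d).trace) := by
    have hΦa : Φ = a + d := by rw [hd]; abel
    have h2 : (Φ * a).trace = (a * Φ).trace := Matrix.trace_mul_comm Φ a
    have h3 : (a * Φ).trace = (a * a).trace + (a * d).trace := by
      rw [hΦa, Matrix.mul_add, Matrix.trace_add]
    rw [hkey, Matrix.trace_add, Matrix.trace_sub, Matrix.trace_sub, htp (a * a),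
      h2, h3]
    ring
  -- each summand has zero trace
  have hle : (∑ k, c k * (c k)ᴴ).trace ≤ 0 := by
    rw [htr]
    exact neg_nonpos_of_nonneg (add_nonneg had had)
  have hge0 : ∀ k ∈ Finset.univ, (0:ℂ) ≤ (c k * (c k)ᴴ).trace := fun k _ =>
    trace_psd_nonneg (Matrix.posSemidef_self_mul_conjTranspose (c k))
  have hsum0 : ∑ k, (c k * (c k)ᴴ).trace = 0 :=
    le_antisymm (by rw [← Matrix.trace_sum]; exact hle) (Finset.sum_nonneg hge0)
  have hzero : ∀ k, c k = 0 := fun k =>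
    eq_zero_of_trace_mul_conjTranspose
      ((Finset.sum_eq_zero_iff_of_nonneg hge0).mp hsum0 k (Finset.mem_univ k))
  intro k
  have := hzero k
  simp only [hc, sub_eq_zero] at this
  exact this.symm
end

section
/- Let x be a self-adjoint operator on a Hilbert space with x² ≤ 1, let a be a positive operator, ξ a unit vector, and λ = ‖a‖. If ⟨a x ξ, x ξ⟩ = λ and ⟨a ξ, ξ⟩ = λ, then a x ξ = λ x ξ. -/
lemma pos_inner_zero {H : Type*} [NormedAddCommGroup H] [InnerProductSpace ℂ H]
    [CompleteSpace H] {T : H →L[ℂ] H} (hT : T.IsPositive) {η : H}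
    (h : (inner ℂ (T η) η : ℂ).re = 0) : T η = 0 := by
  have hsym : ∀ v w : H, (inner ℂ (T v) w : ℂ) = inner ℂ v (T w) :=
    (ContinuousLinearMap.isSelfAdjoint_iff_isSymmetric.mp hT.isSelfAdjoint)
  have hpos : ∀ v : H, 0 ≤ (inner ℂ (T v) v : ℂ).re := fun v => by
    simpa using hT.re_inner_nonneg_left v
  set u := T η with hu
  set c : ℝ := (inner ℂ (T η) u : ℂ).re with hc
  set d : ℝ := (inner ℂ (T u) u : ℂ).re with hd
  have hd0 : 0 ≤ d := hpos u
  have hc0 : c = ‖u‖ ^ 2 := by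
    rw [hc, ← hu]
    have := inner_self_eq_norm_sq (𝕜 := ℂ) u
    simpa using this
  have key : ∀ t : ℝ, 0 ≤ 2 * t * c + t ^ 2 * d := by
    intro t
    have h0 : 0 ≤ (inner ℂ (T (η + (t : ℂ) • u)) (η + (t : ℂ) • u) : ℂ).re := hpos _
    have hexp : (inner ℂ (T (η + (t : ℂ) • u)) (η + (t : ℂ) • u) : ℂ)
        = inner ℂ (T η) η + (t : ℂ) * inner ℂ (T η) u
          + (t : ℂ) * inner ℂ (T u) η + ((t^2 : ℝ) : ℂ) * inner ℂ (T u) u := by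
      rw [map_add, map_smul]
      simp only [inner_add_left, inner_add_right, inner_smul_left, inner_smul_right,
        Complex.conj_ofReal]
      push_cast
      ring
    have hre : (inner ℂ (T u) η : ℂ).re = c := by
      have h3 : (inner ℂ (T u) η : ℂ) = starRingEnd ℂ (inner ℂ (T η) u) := by
        rw [hsym u η]
        exact (inner_conj_symm _ _).symm
      rw [hc, h3, Complex.conj_re]
    rw [hexp] at h0
    simp only [Complex.add_re, Complex.mul_re, Complex.ofReal_re, Complex.ofReal_im,
      zero_mul, sub_zero] at h0
    rw [h, hre, ← hc, ← hd] at h0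
    nlinarith [h0]
  have hceq : c = 0 := by
    have hd1 : (0:ℝ) < d + 1 := by linarith
    have h3 := key (-(c / (d + 1)))
    have h4 : 2 * (-(c / (d + 1))) * c + (-(c / (d + 1))) ^ 2 * d
        = (-(c ^ 2) * (d + 2)) / (d + 1) ^ 2 := by
      field_simp
      ring
    rw [h4] at h3
    have h5 : 0 ≤ -(c ^ 2) * (d + 2) := by
      have := (le_div_iff₀ (by positivity : (0:ℝ) < (d + 1) ^ 2)).mp h3
      linarith [this]
    nlinarith [sq_nonneg c, hc0, sq_nonneg ‖u‖]
  have hn : ‖u‖ ^ 2 = 0 := by rw [← hc0]; exact hceq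
  have hu0 : u = 0 := by simpa [sq] using hn
  simpa [hu] using hu0


lemma inner_self_c {H : Type*} [NormedAddCommGroup H] [InnerProductSpace ℂ H] (v : H) :
    (inner ℂ v v : ℂ) = ((‖v‖ ^ 2 : ℝ) : ℂ) := by
  rw [inner_self_eq_norm_sq_to_K]
  norm_cast

/-- If x is a self-adjoint operator with x² ≤ 1, a is a positive operator with
λ = ‖a‖, and ξ is a unit vector with ⟨a(xξ), xξ⟩ = λ and ⟨aξ, ξ⟩ = λ, then
a(xξ) = λ • (xξ). -/
theorem eigenvector_step {H : Type*} [NormedAddCommGroup H] [InnerProductSpace ℂ H]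
    [CompleteSpace H] (x a : H →L[ℂ] H)
    (hx : IsSelfAdjoint x) (hx2 : (1 - x * x).IsPositive)
    (ha : a.IsPositive) (ξ : H) (hξ : ‖ξ‖ = 1)
    (h1 : inner ℂ (a (x ξ)) (x ξ) = ((‖a‖ : ℝ) : ℂ))
    (h2 : inner ℂ (a ξ) ξ = ((‖a‖ : ℝ) : ℂ)) :
    a (x ξ) = ((‖a‖ : ℝ) : ℂ) • x ξ := by
  set η := x ξ with hη
  set r : ℝ := ‖a‖ with hr
  have hr0 : 0 ≤ r := norm_nonneg a
  have hxsym : ∀ v w : H, (inner ℂ (x v) w : ℂ) = inner ℂ v (x w) :=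
    (ContinuousLinearMap.isSelfAdjoint_iff_isSymmetric.mp hx)
  -- ‖η‖² ≤ 1
  have hη1 : ‖η‖ ^ 2 ≤ 1 := by
    have h0 : 0 ≤ (inner ℂ ((1 - x * x) ξ) ξ : ℂ).re := by
      exact hx2.re_inner_nonneg_left ξ
    have hcalc : (inner ℂ ((1 - x * x) ξ) ξ : ℂ) = inner ℂ ξ ξ - inner ℂ η η := by
      simp only [ContinuousLinearMap.sub_apply, ContinuousLinearMap.one_apply,
        ContinuousLinearMap.mul_apply, inner_sub_left]
      rw [hxsym (x ξ) ξ, hη]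
    rw [hcalc] at h0
    have e1 : (inner ℂ ξ ξ : ℂ).re = 1 := by
      rw [inner_self_c, Complex.ofReal_re, hξ]; norm_num
    have e2 : (inner ℂ η η : ℂ).re = ‖η‖ ^ 2 := by
      rw [inner_self_c, Complex.ofReal_re]
    simp only [Complex.sub_re, e1, e2] at h0
    linarith
  -- b = r • 1 - a is positive
  set b : H →L[ℂ] H := ((r : ℂ) • (1 : H →L[ℂ] H)) - a with hb
  have hbsa : IsSelfAdjoint b := by
    apply IsSelfAdjoint.sub
    · exact IsSelfAdjoint.smul (by rw [IsSelfAdjoint]; exact Complex.conj_ofReal r) (IsSelfAdjoint.one _)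
    · exact ha.isSelfAdjoint
  have hbpos : b.IsPositive := by
    refine ⟨ContinuousLinearMap.isSelfAdjoint_iff_isSymmetric.mp hbsa, fun v => ?_⟩
    have hcalc : (inner ℂ (b v) v : ℂ) = (r : ℂ) * inner ℂ v v - inner ℂ (a v) v := by
      rw [hb, ContinuousLinearMap.sub_apply, inner_sub_left,
        ContinuousLinearMap.smul_apply, ContinuousLinearMap.one_apply, inner_smul_left,
        Complex.conj_ofReal]
    have hub : (inner ℂ (a v) v : ℂ).re ≤ r * ‖v‖ ^ 2 := by
      calc (inner ℂ (a v) v : ℂ).re ≤ ‖(inner ℂ (a v) v : ℂ)‖ := Complex.re_le_norm _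
        _ ≤ ‖a v‖ * ‖v‖ := norm_inner_le_norm _ _
        _ ≤ (‖a‖ * ‖v‖) * ‖v‖ := by
            exact mul_le_mul_of_nonneg_right (a.le_opNorm v) (norm_nonneg v)
        _ = r * ‖v‖ ^ 2 := by rw [hr]; ring
    have hvv : (inner ℂ v v : ℂ).re = ‖v‖ ^ 2 := by
      rw [inner_self_c, Complex.ofReal_re]
    have : 0 ≤ (inner ℂ (b v) v : ℂ).re := by
      rw [hcalc]
      simp only [Complex.sub_re, Complex.mul_re, Complex.ofReal_re, Complex.ofReal_im,
        zero_mul, sub_zero, hvv]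
      linarith
    simpa [ContinuousLinearMap.reApplyInnerSelf] using this
  -- ⟨bη, η⟩ = 0
  have hbz : (inner ℂ (b η) η : ℂ).re = 0 := by
    have hge : 0 ≤ (inner ℂ (b η) η : ℂ).re := by
      simpa using hbpos.re_inner_nonneg_left η
    have hcalc : (inner ℂ (b η) η : ℂ) = (r : ℂ) * inner ℂ η η - inner ℂ (a η) η := by
      rw [hb, ContinuousLinearMap.sub_apply, inner_sub_left,
        ContinuousLinearMap.smul_apply, ContinuousLinearMap.one_apply, inner_smul_left,
        Complex.conj_ofReal]
    have hle : (inner ℂ (b η) η : ℂ).re ≤ 0 := by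
      rw [hcalc, h1]
      have hvv : (inner ℂ η η : ℂ).re = ‖η‖ ^ 2 := by
        rw [inner_self_c, Complex.ofReal_re]
      have him : (inner ℂ η η : ℂ).im = 0 := by
        rw [inner_self_c, Complex.ofReal_im]
      simp only [Complex.sub_re, Complex.mul_re, Complex.ofReal_re, Complex.ofReal_im,
        zero_mul, sub_zero, hvv, him, mul_zero]
      nlinarith
    linarith
  have hbη : b η = 0 := pos_inner_zero hbpos hbz
  have : (r : ℂ) • η - a η = 0 := by
    simpa [hb, ContinuousLinearMap.sub_apply] using hbη
  have := sub_eq_zero.mp this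
  rw [← this]
end

section
/- Let a be a positive semidefinite matrix and ε a real number with |ε| < ‖a‖⁻¹. Then f_ε(a) = a²(1 − εa)⁻¹ satisfies 0 ≤ f_ε(a) ≤ λ a, where λ = ‖a‖(1 − |ε|‖a‖)⁻¹. -/
open Matrix ComplexOrder
open scoped Matrix.Norms.L2Operator

/-- cfc of a function nonnegative on the eigenvalues is positive semidefinite. -/
lemma cfc_posSemidef_aux {n : ℕ} {a : Matrix (Fin n) (Fin n) ℂ} (ha : a.IsHermitian)
    {f : ℝ → ℝ} (hf : ∀ i, 0 ≤ f (ha.eigenvalues i)) : (ha.cfc f).PosSemidef := by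
  rw [Matrix.IsHermitian.cfc]
  exact (Matrix.posSemidef_diagonal_iff.mpr fun i => by
    simpa using Complex.zero_le_real.mpr (hf i)).mul_mul_conjTranspose_same _

/-- Eigenvalues of a Hermitian matrix are bounded by the L2 operator norm. -/
lemma eig_le_norm_aux {n : ℕ} {a : Matrix (Fin n) (Fin n) ℂ} (ha : a.IsHermitian) (i : Fin n) :
    ha.eigenvalues i ≤ ‖a‖ := by
  have hv : ‖(ha.eigenvectorBasis i : EuclideanSpace ℂ (Fin n))‖ = 1 :=
    ha.eigenvectorBasis.orthonormal.1 i
  have h := a.l2_opNorm_mulVec (ha.eigenvectorBasis i)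
  have key : (EuclideanSpace.equiv (Fin n) ℂ).symm (a *ᵥ ha.eigenvectorBasis i)
      = ha.eigenvalues i • ha.eigenvectorBasis i := by
    ext j
    exact congrFun (ha.mulVec_eigenvectorBasis i) j
  rw [key, norm_smul, hv, Real.norm_eq_abs] at h
  exact (le_abs_self _).trans (by linarith)

/-- If a is positive semidefinite and |ε| < ‖a‖⁻¹, then
0 ≤ f_ε(a) = a²(1 − εa)⁻¹ ≤ λ a in the Loewner order, where
λ = ‖a‖(1 − |ε|‖a‖)⁻¹ and ‖·‖ is the operator norm. -/
theorem f_eps_dominated {n : ℕ} (a : Matrix (Fin n) (Fin n) ℂ) (ha : a.PosSemidef)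
    (ε : ℝ) (hε : |ε| < ‖a‖⁻¹) :
    (ha.1.cfc fun t : ℝ => t ^ 2 * (1 - ε * t)⁻¹).PosSemidef ∧
    (((‖a‖ * (1 - |ε| * ‖a‖)⁻¹ : ℝ) : ℂ) • a -
      ha.1.cfc fun t : ℝ => t ^ 2 * (1 - ε * t)⁻¹).PosSemidef := by
  have hnorm : 0 < ‖a‖ := by
    rcases lt_or_eq_of_le (norm_nonneg a) with h | h
    · exact h
    · rw [← h] at hε; simp at hε; linarith [abs_nonneg ε]
  have h1 : 0 < 1 - |ε| * ‖a‖ := by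
    have : |ε| * ‖a‖ < ‖a‖⁻¹ * ‖a‖ := mul_lt_mul_of_pos_right hε hnorm
    rw [inv_mul_cancel₀ hnorm.ne'] at this
    linarith
  set μ := ha.1.eigenvalues with hμ
  have hμ0 : ∀ i, 0 ≤ μ i := ha.eigenvalues_nonneg
  have hμle : ∀ i, μ i ≤ ‖a‖ := fun i => eig_le_norm_aux ha.1 i
  have hεμ : ∀ i, ε * μ i ≤ |ε| * ‖a‖ := fun i =>
    calc ε * μ i ≤ |ε| * μ i := mul_le_mul_of_nonneg_right (le_abs_self ε) (hμ0 i)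
      _ ≤ |ε| * ‖a‖ := mul_le_mul_of_nonneg_left (hμle i) (abs_nonneg ε)
  have hden : ∀ i, 0 < 1 - ε * μ i := fun i => by linarith [hεμ i]
  have hf0 : ∀ i, 0 ≤ (μ i) ^ 2 * (1 - ε * μ i)⁻¹ := fun i =>
    mul_nonneg (sq_nonneg _) (inv_nonneg.mpr (hden i).le)
  have hfle : ∀ i, (μ i) ^ 2 * (1 - ε * μ i)⁻¹ ≤ ‖a‖ * (1 - |ε| * ‖a‖)⁻¹ * μ i := by
    intro i
    have hinv : (1 - ε * μ i)⁻¹ ≤ (1 - |ε| * ‖a‖)⁻¹ := by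
      apply inv_anti₀ h1
      linarith [hεμ i]
    calc (μ i) ^ 2 * (1 - ε * μ i)⁻¹ = (μ i * (1 - ε * μ i)⁻¹) * μ i := by ring
      _ ≤ (‖a‖ * (1 - |ε| * ‖a‖)⁻¹) * μ i := by
          refine mul_le_mul_of_nonneg_right ?_ (hμ0 i)
          exact mul_le_mul (hμle i) hinv (inv_nonneg.mpr (hden i).le) (norm_nonneg a)
  refine ⟨cfc_posSemidef_aux ha.1 hf0, ?_⟩
  rw [Matrix.IsHermitian.cfc, Unitary.conjStarAlgAut_apply]
  set c : ℂ := ((‖a‖ * (1 - |ε| * ‖a‖)⁻¹ : ℝ) : ℂ) with hc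
  set lam : ℝ := ‖a‖ * (1 - |ε| * ‖a‖)⁻¹ with hlam
  set U : Matrix (Fin n) (Fin n) ℂ :=
    (Matrix.IsHermitian.eigenvectorUnitary ha.1 : Matrix (Fin n) (Fin n) ℂ) with hU
  have key : c • a -
      U * diagonal (RCLike.ofReal ∘ (fun t : ℝ => t ^ 2 * (1 - ε * t)⁻¹) ∘ μ) * star U
      = U * diagonal (fun i =>
          ((lam * μ i - (μ i) ^ 2 * (1 - ε * μ i)⁻¹ : ℝ) : ℂ)) * star U := by
    conv_lhs => rw [ha.1.spectral_theorem, Unitary.conjStarAlgAut_apply]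
    rw [← smul_mul_assoc, ← mul_smul_comm, ← sub_mul, ← mul_sub]
    congr 2
    ext i j
    rcases eq_or_ne i j with rfl | hij
    · simp [Matrix.diagonal_apply_eq, Function.comp, hc, hμ]
    · simp [Matrix.diagonal_apply_ne _ hij]
  rw [key, Matrix.star_eq_conjTranspose]
  refine Matrix.PosSemidef.mul_mul_conjTranspose_same ?_ U
  refine Matrix.posSemidef_diagonal_iff.mpr fun i => ?_
  exact Complex.zero_le_real.mpr (by linarith [hfle i])
end
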